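/- The machine M computes the constant-zero function on unary inputs: for every k there exists an n such that the n-th iterate of the step function on init_k is the configuration (Q3, fun _ => false, 1), i.e., M halts on input 0 1^k with all tape cells equal to 0, scanning the second cell. -/

import Mathlib

/-- Configurations of the 3-state Turing machine: (state, tape, head position). -/
abbrev Config : Type := Fin 3 × (ℕ → Bool) × ℕ

/-- The total step function of the machine M. State 0 = Q1, 1 = Q2, 2 = Q3 (halt). -/
def step (c : Config) : Config :=
  match c with
  | (q, T, p) =>
    if q = 0 then (if T p then (0, T, p + 1) else (1, T, p - 1))
    else if q = 1 then
      (if T p then (1, Function.update T p false, p - 1) else (2, T, p + 1))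
    else (2, T, p)

/-- The input tape 0 1^k 0 0 ⋯ : cell i holds 1 iff 1 ≤ i ≤ k. -/
def tape (k : ℕ) : ℕ → Bool := fun i => decide (1 ≤ i ∧ i ≤ k)

/-- Initial configuration on input 0 1^k: state Q1, scanning cell 1. -/
def init (k : ℕ) : Config := (0, tape k, 1)

/-! In state Q1 the head runs right across the block of ones to the first blank, then in state
Q2 it walks back left, erasing one cell per step, until it reaches the blank cell 0; there Q2
moves right once and halts. On input `0 1^k` this takes `(k + 1) + (k + 1)` steps. -/

section Step

variable (T : ℕ → Bool) (p : ℕ)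

lemma step_scan_of_true (h : T p = true) : step (0, T, p) = (0, T, p + 1) := by
  simp [step, h]

lemma step_scan_of_false (h : T p = false) : step (0, T, p) = (1, T, p - 1) := by
  simp [step, h]

lemma step_erase_of_true (h : T p = true) :
    step (1, T, p) = (1, Function.update T p false, p - 1) := by
  simp [step, h]

lemma step_erase_of_false (h : T p = false) : step (1, T, p) = (2, T, p + 1) := by
  simp [step, h]

lemma step_iterate_scan (j : ℕ) (h : ∀ i < j, T (p + i) = true) :
    step^[j] (0, T, p) = (0, T, p + j) := by
  induction j with
  | zero => rfl
  | succ j ih =>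
    rw [Function.iterate_succ_apply', ih fun i hi => h i (by omega),
      step_scan_of_true _ _ (h j j.lt_succ_self)]
    rfl

end Step

lemma tape_zero : tape 0 = fun _ => false := by
  funext i
  simp only [tape, decide_eq_false_iff_not]
  omega

lemma update_tape_succ (m : ℕ) : Function.update (tape (m + 1)) (m + 1) false = tape m := by
  funext i
  rcases eq_or_ne i (m + 1) with rfl | hi
  · simp [tape]
  · simp only [Function.update_of_ne hi, tape, decide_eq_decide]
    omega

lemma step_iterate_erase_tape (m : ℕ) : step^[m] (1, tape m, m) = (1, tape 0, 0) := by
  induction m with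
  | zero => rfl
  | succ m ih =>
    rw [Function.iterate_succ_apply, step_erase_of_true _ _ (by simp [tape]), update_tape_succ]
    exact ih

lemma step_iterate_init (k : ℕ) : step^[k + 1] (init k) = (1, tape k, k) := by
  rw [Function.iterate_succ_apply', init,
    step_iterate_scan _ _ _ fun i hi => by simp only [tape, decide_eq_true_eq]; omega,
    step_scan_of_false _ _ (by simp [tape])]
  simp

/-- M computes the constant-zero function on unary inputs: on input 0 1^k
it halts with an all-zero tape, scanning the second tape cell. -/
theorem computes_constant_zero (k : ℕ) :
    ∃ n, step^[n] (init k) = (2, fun _ => false, 1) := by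
  refine ⟨(k + 1) + (k + 1), ?_⟩
  rw [Function.iterate_add_apply, step_iterate_init, Function.iterate_succ_apply',
    step_iterate_erase_tape, step_erase_of_false _ _ (by simp [tape]), tape_zero]
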